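/- Let x be uniformly distributed on C_R = [-R/2,R/2]^d and let f, g be bandlimited functions with ‖f‖₂ = ‖g‖₂ = 1. With Y(h) = |h(x)|² - R^{-d}∫_{C_R}|h|², one has Var(Y(f) - Y(g)) ≤ (4/R^d)·‖f-g‖²_{∞,R}, where ‖h‖_{∞,R} = sup_{t ∈ C_R}|h(t)|. -/

import Mathlib

/-!
A bandlimited function is the inverse Fourier transform of an `L²` function supported in a
bounded cube, hence of an `L¹` function, so it is continuous and `‖f - g‖_{∞,R}` is a genuine
maximum. The centred variable `Y(f) - Y(g)` differs from `ψ(x)`, `ψ = |f|² - |g|²`, by a constant,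
so its variance is at most `E[ψ(x)²] = R^{-d} ∫_{C_R} ψ²`. Pointwise
`ψ² = (|f| - |g|)² (|f| + |g|)² ≤ 2 ‖f - g‖²_{∞,R} (|f|² + |g|²)` on `C_R`, and
`∫_{C_R} (|f|² + |g|²) ≤ ‖f‖₂² + ‖g‖₂² = 2`.
-/

open MeasureTheory ProbabilityTheory

/-- The cube `C_R = [-R/2, R/2]^d` in `ℝ^d`. -/
def cubeR (d : ℕ) (R : ℝ) : Set (EuclideanSpace ℝ (Fin d)) :=
  {x | ∀ i, |x i| ≤ R / 2}

/-- `f` is bandlimited with spectrum in `[-1/2,1/2]^d`. -/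
def IsBandlimited (d : ℕ) (f : EuclideanSpace ℝ (Fin d) → ℂ) : Prop :=
  ∃ g : EuclideanSpace ℝ (Fin d) → ℂ,
    MemLp g 2 volume ∧
    (∀ ξ : EuclideanSpace ℝ (Fin d), (∃ i, (1 : ℝ) / 2 < |ξ i|) → g ξ = 0) ∧
    ∀ x, f x = ∫ ξ, Complex.exp (2 * Real.pi * Complex.I * ((inner ℝ ξ x : ℝ) : ℂ)) * g ξ

open FourierTransform

theorem isCompact_cubeR (d : ℕ) (R : ℝ) : IsCompact (cubeR d R) := by
  have hpre : cubeR d R = EuclideanSpace.equiv (Fin d) ℝ ⁻¹'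
      Set.univ.pi fun _ => Set.Icc (-(R / 2)) (R / 2) := by
    ext x
    simp only [cubeR, Set.mem_preimage, Set.mem_univ_pi, Set.mem_Icc, abs_le]
    rfl
  rw [hpre]
  exact (EuclideanSpace.equiv (Fin d) ℝ).toHomeomorph.isCompact_preimage.mpr
    (isCompact_univ_pi fun _ => isCompact_Icc)

theorem IsCompact.le_ciSup_of_continuousOn {X : Type*} [TopologicalSpace X] {s : Set X}
    (hs : IsCompact s) {F : X → ℝ} (hF : ContinuousOn F s) {t : X} (ht : t ∈ s) :
    F t ≤ ⨆ u : s, F u :=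
  le_ciSup (f := fun u : s => F u) (by simpa only [Set.image_eq_range] using hs.bddAbove_image hF)
    ⟨t, ht⟩

theorem Real.continuous_fourierInv {V E : Type*} [NormedAddCommGroup V] [InnerProductSpace ℝ V]
    [MeasurableSpace V] [BorelSpace V] [FiniteDimensional ℝ V]
    [NormedAddCommGroup E] [NormedSpace ℂ E] {φ : V → E} (hφ : Integrable φ) :
    Continuous (𝓕⁻ φ) :=
  VectorFourier.fourierIntegral_continuous Real.continuous_fourierChar
    (by simp only [LinearMap.neg_apply, innerₗ_apply_apply]; fun_prop) hφ

theorem IsBandlimited.exists_integrable_eq_fourierInv {d : ℕ} {f : EuclideanSpace ℝ (Fin d) → ℂ}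
    (hf : IsBandlimited d f) : ∃ φ : EuclideanSpace ℝ (Fin d) → ℂ, Integrable φ ∧ f = 𝓕⁻ φ := by
  obtain ⟨φ, hφ2, hφ_supp, hf_eq⟩ := hf
  have : IsFiniteMeasure (volume.restrict (cubeR d 1)) :=
    isFiniteMeasure_restrict.mpr (isCompact_cubeR d 1).measure_lt_top.ne
  have hφ_zero (ξ) (hξ : ξ ∉ cubeR d 1) : φ ξ = 0 :=
    hφ_supp ξ (by simpa [cubeR] using hξ)
  have hφ_on : IntegrableOn φ (cubeR d 1) := (hφ2.restrict _).integrable one_le_two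
  refine ⟨φ, hφ_on.integrable_of_forall_notMem_eq_zero hφ_zero, funext fun x => ?_⟩
  rw [hf_eq, Real.fourierInv_eq']
  congr 1 with ξ
  rw [smul_eq_mul]
  congr 2
  push_cast
  ring

theorem IsBandlimited.continuous {d : ℕ} {f : EuclideanSpace ℝ (Fin d) → ℂ}
    (hf : IsBandlimited d f) : Continuous f := by
  obtain ⟨φ, hφ, rfl⟩ := IsBandlimited.exists_integrable_eq_fourierInv hf
  exact Real.continuous_fourierInv hφ

theorem sq_norm_sq_sub_norm_sq_le {E : Type*} [SeminormedAddCommGroup E] (a b : E) :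
    (‖a‖ ^ 2 - ‖b‖ ^ 2) ^ 2 ≤ 2 * ‖a - b‖ ^ 2 * (‖a‖ ^ 2 + ‖b‖ ^ 2) := by
  have hdiff : (‖a‖ - ‖b‖) ^ 2 ≤ ‖a - b‖ ^ 2 := sq_le_sq' (abs_le.mp (abs_norm_sub_norm_le a b)).1
    (abs_le.mp (abs_norm_sub_norm_le a b)).2
  calc (‖a‖ ^ 2 - ‖b‖ ^ 2) ^ 2 = (‖a‖ - ‖b‖) ^ 2 * (‖a‖ + ‖b‖) ^ 2 := by ring
    _ ≤ ‖a - b‖ ^ 2 * (2 * (‖a‖ ^ 2 + ‖b‖ ^ 2)) := by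
        gcongr
        nlinarith [sq_nonneg (‖a‖ - ‖b‖)]
    _ = 2 * ‖a - b‖ ^ 2 * (‖a‖ ^ 2 + ‖b‖ ^ 2) := by ring

theorem integral_sq_norm_sq_sub_norm_sq_le {α E : Type*} [MeasurableSpace α] {μ : Measure α}
    [NormedAddCommGroup E] {f g : α → E} {M : ℝ}
    (hf : Integrable (fun t => ‖f t‖ ^ 2) μ) (hg : Integrable (fun t => ‖g t‖ ^ 2) μ)
    (hM : ∀ᵐ t ∂μ, ‖f t - g t‖ ≤ M) :
    ∫ t, (‖f t‖ ^ 2 - ‖g t‖ ^ 2) ^ 2 ∂μ ≤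
      2 * M ^ 2 * ((∫ t, ‖f t‖ ^ 2 ∂μ) + ∫ t, ‖g t‖ ^ 2 ∂μ) := by
  rw [← integral_add hf hg, ← integral_const_mul]
  refine integral_mono_of_nonneg (ae_of_all _ fun t => sq_nonneg _)
    ((hf.add hg).const_mul _) ?_
  filter_upwards [hM] with t ht
  calc (‖f t‖ ^ 2 - ‖g t‖ ^ 2) ^ 2 ≤ 2 * ‖f t - g t‖ ^ 2 * (‖f t‖ ^ 2 + ‖g t‖ ^ 2) :=
        sq_norm_sq_sub_norm_sq_le _ _
    _ ≤ 2 * M ^ 2 * (‖f t‖ ^ 2 + ‖g t‖ ^ 2) := by gcongr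

theorem integral_norm_sq_eq_toReal_eLpNorm_sq {α E : Type*} [MeasurableSpace α] {μ : Measure α}
    [NormedAddCommGroup E] {f : α → E} (hf : AEStronglyMeasurable f μ) :
    ∫ t, ‖f t‖ ^ 2 ∂μ = (eLpNorm f 2 μ).toReal ^ 2 := by
  rw [toReal_eLpNorm hf, lpNorm_eq_integral_norm_rpow_toReal two_ne_zero ENNReal.ofNat_ne_top hf]
  norm_num
  rw [← Real.sqrt_eq_rpow, Real.sq_sqrt (integral_nonneg fun _ => by positivity)]

theorem MemLp.setIntegral_norm_sq_le {α E : Type*} [MeasurableSpace α] {μ : Measure α}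
    [NormedAddCommGroup E] {f : α → E} (hf : MemLp f 2 μ) (s : Set α) :
    ∫ t in s, ‖f t‖ ^ 2 ∂μ ≤ (eLpNorm f 2 μ).toReal ^ 2 := by
  rw [integral_norm_sq_eq_toReal_eLpNorm_sq hf.aestronglyMeasurable.restrict]
  exact pow_le_pow_left₀ ENNReal.toReal_nonneg
    (ENNReal.toReal_mono hf.eLpNorm_ne_top (eLpNorm_restrict_le f 2 μ s)) 2

theorem variance_comp_le_of_map_eq_smul {Ω E : Type*} [MeasurableSpace Ω] {P : Measure Ω}
    [IsProbabilityMeasure P] [MeasurableSpace E] {X : Ω → E} (hX : Measurable X)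
    {c : ENNReal} {ν : Measure E} (hXν : P.map X = c • ν) {ψ : E → ℝ} (hψ : Measurable ψ) :
    Var[fun ω => ψ (X ω); P] ≤ c.toReal * ∫ t, ψ t ^ 2 ∂ν := by
  calc Var[fun ω => ψ (X ω); P] ≤ ∫ ω, ψ (X ω) ^ 2 ∂P :=
        variance_le_expectation_sq (X := fun ω => ψ (X ω)) (hψ.comp hX).aestronglyMeasurable
    _ = c.toReal * ∫ t, ψ t ^ 2 ∂ν := by
        rw [← integral_map (f := fun t => ψ t ^ 2) hX.aemeasurable
          (hψ.pow_const 2).aestronglyMeasurable, hXν, integral_smul_measure, smul_eq_mul]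

theorem stmt_7_general {Ω : Type*} [MeasureSpace Ω] [IsProbabilityMeasure (ℙ : Measure Ω)]
    (d : ℕ) (R : ℝ) (hR : 0 < R)
    (x : Ω → EuclideanSpace ℝ (Fin d)) (hxm : Measurable x)
    (hx : Measure.map x ℙ = (ENNReal.ofReal (R ^ d))⁻¹ • volume.restrict (cubeR d R))
    (f g : EuclideanSpace ℝ (Fin d) → ℂ)
    (hf : IsBandlimited d f) (hg : IsBandlimited d g)
    (hf2 : MemLp f 2 volume) (hg2 : MemLp g 2 volume)
    (hfnorm : eLpNorm f 2 volume = 1) (hgnorm : eLpNorm g 2 volume = 1) :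
    variance (fun ω =>
        (‖f (x ω)‖ ^ 2 - (R ^ d)⁻¹ * ∫ t in cubeR d R, ‖f t‖ ^ 2) -
        (‖g (x ω)‖ ^ 2 - (R ^ d)⁻¹ * ∫ t in cubeR d R, ‖g t‖ ^ 2)) ℙ ≤
      4 / R ^ d * (⨆ t : cubeR d R, ‖f t - g t‖) ^ 2 := by
  have hfc := IsBandlimited.continuous hf
  have hgc := IsBandlimited.continuous hg
  set M := ⨆ t : cubeR d R, ‖f t - g t‖
  have hM (t) (ht : t ∈ cubeR d R) : ‖f t - g t‖ ≤ M :=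
    (isCompact_cubeR d R).le_ciSup_of_continuousOn (F := fun t => ‖f t - g t‖) (by fun_prop) ht
  set ψ : EuclideanSpace ℝ (Fin d) → ℝ := fun t => ‖f t‖ ^ 2 - ‖g t‖ ^ 2
  have hψc : Continuous ψ := by fun_prop
  have hψx : Measurable fun ω => ψ (x ω) := hψc.measurable.comp hxm
  have hψ_cube : ∫ t in cubeR d R, ψ t ^ 2 ≤ 4 * M ^ 2 := by
    calc ∫ t in cubeR d R, ψ t ^ 2
        ≤ 2 * M ^ 2 * ((∫ t in cubeR d R, ‖f t‖ ^ 2) + ∫ t in cubeR d R, ‖g t‖ ^ 2) :=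
          integral_sq_norm_sq_sub_norm_sq_le hf2.norm.integrable_sq.integrableOn
            hg2.norm.integrable_sq.integrableOn
            (ae_restrict_of_forall_mem (isCompact_cubeR d R).measurableSet hM)
      _ ≤ 2 * M ^ 2 * (1 + 1) := by
          gcongr
          · simpa [hfnorm] using MemLp.setIntegral_norm_sq_le hf2 (cubeR d R)
          · simpa [hgnorm] using MemLp.setIntegral_norm_sq_le hg2 (cubeR d R)
      _ = 4 * M ^ 2 := by ring
  calc _ = Var[fun ω => ψ (x ω); ℙ] := by
        rw [← variance_sub_const hψx.aestronglyMeasurable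
          ((R ^ d)⁻¹ * (∫ t in cubeR d R, ‖f t‖ ^ 2) - (R ^ d)⁻¹ * ∫ t in cubeR d R, ‖g t‖ ^ 2)]
        congr 1 with ω
        ring
    _ ≤ (R ^ d)⁻¹ * ∫ t in cubeR d R, ψ t ^ 2 := by
        simpa [ENNReal.toReal_ofReal (pow_nonneg hR.le d)] using
          variance_comp_le_of_map_eq_smul hxm hx hψc.measurable
    _ ≤ (R ^ d)⁻¹ * (4 * M ^ 2) := by gcongr
    _ = 4 / R ^ d * M ^ 2 := by ring

/-- If `x` is uniformly distributed on `C_R` and `f, g` are bandlimited with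
`‖f‖₂ = ‖g‖₂ = 1`, then with `Y(h) = |h(x)|² - R^{-d} ∫_{C_R} |h|²` one has
`Var(Y(f) - Y(g)) ≤ (4/R^d) ‖f - g‖²_{∞,R}`. -/
theorem stmt_7 {Ω : Type*} [MeasureSpace Ω] [IsProbabilityMeasure (ℙ : Measure Ω)]
    (d : ℕ) (hd : 1 ≤ d) (R : ℝ) (hR : 0 < R)
    (x : Ω → EuclideanSpace ℝ (Fin d)) (hxm : Measurable x)
    (hx : Measure.map x ℙ = (ENNReal.ofReal (R ^ d))⁻¹ • volume.restrict (cubeR d R))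
    (f g : EuclideanSpace ℝ (Fin d) → ℂ)
    (hf : IsBandlimited d f) (hg : IsBandlimited d g)
    (hf2 : MemLp f 2 volume) (hg2 : MemLp g 2 volume)
    (hfnorm : eLpNorm f 2 volume = 1) (hgnorm : eLpNorm g 2 volume = 1) :
    variance (fun ω =>
        (‖f (x ω)‖ ^ 2 - (R ^ d)⁻¹ * ∫ t in cubeR d R, ‖f t‖ ^ 2) -
        (‖g (x ω)‖ ^ 2 - (R ^ d)⁻¹ * ∫ t in cubeR d R, ‖g t‖ ^ 2)) ℙ ≤
      4 / R ^ d * (⨆ t : cubeR d R, ‖f t - g t‖) ^ 2 :=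
  stmt_7_general d R hR x hxm hx f g hf hg hf2 hg2 hfnorm hgnorm
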